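/- arXiv:1004.3220 — 2 statements merged into one kernel-verified Lean document; each statement's English description precedes it below -/
import Mathlib

section
/- For every r ≥ 1, G_r(t,u,1,z) = t^{r+1}·z^r·u·(1-u)·Σ_{s≥0} u^s·(1-t)^s·δ_s^{-1}·δ_{s+1}^{-1}·Π_{i=1}^{s+1} γ_i^{-1}, where the infinite sum converges in the formal power series ring ℚ⟦t,u,v,z⟧ (the s-th summand is divisible by u^s). -/
/-!
STATEMENT 3: For every r ≥ 1,
G_r(t,u,1,z) = t^{r+1}·z^r·u·(1-u)·Σ_{s≥0} u^s·(1-t)^s·δ_s⁻¹·δ_{s+1}⁻¹·Π_{i=1}^{s+1} γ_i⁻¹,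
the infinite sum converging in the formal power series ring ℚ⟦t,u,v,z⟧.
-/

/-- Number of ascents of a finite sequence of naturals. -/
def ascents (l : List ℕ) : ℕ := (l.zip l.tail).countP fun p => decide (p.1 < p.2)

/-- `l` is an ascent sequence: `x₁ = 0` and `xᵢ ∈ [0, 1 + asc(x₁,…,x_{i-1})]`.
The empty sequence is an ascent sequence. -/
def IsAscentSeq (l : List ℕ) : Prop :=
  ∀ i (h : i < l.length), l.get ⟨i, h⟩ ≤ if i = 0 then 0 else ascents (l.take i) + 1

/-- The number of 0's to the left of the leftmost nonzero entry
(0 if there is no nonzero entry). -/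
def runZeros (l : List ℕ) : ℕ :=
  if l.all (· == 0) then 0 else (l.takeWhile (· == 0)).length

/-- `HasPSSum f S` : the (possibly infinite) family `f` of formal power series is
summable in the formal power series topology (coefficientwise, only finitely many
terms contribute to each coefficient) and its sum is `S`. -/
def HasPSSum {ι : Type*} {σ : Type*} (f : ι → MvPowerSeries σ ℚ) (S : MvPowerSeries σ ℚ) : Prop :=
  ∀ e : σ →₀ ℕ, ∃ A : Finset ι, (∀ i ∉ A, MvPowerSeries.coeff e (f i) = 0) ∧
    MvPowerSeries.coeff e S = ∑ i ∈ A, MvPowerSeries.coeff e (f i)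

open MvPowerSeries

/-- The variable `t` in `ℚ⟦t,u,v,z⟧`. -/
noncomputable def T : MvPowerSeries (Fin 4) ℚ := X 0
/-- The variable `u` in `ℚ⟦t,u,v,z⟧`. -/
noncomputable def U : MvPowerSeries (Fin 4) ℚ := X 1
/-- The variable `v` in `ℚ⟦t,u,v,z⟧`. -/
noncomputable def V : MvPowerSeries (Fin 4) ℚ := X 2
/-- The variable `z` in `ℚ⟦t,u,v,z⟧`. -/
noncomputable def Z : MvPowerSeries (Fin 4) ℚ := X 3

/-- `G_r(t,u,v,z) = Σ_w t^{length(w)} u^{asc(w)} v^{last(w)} z^{zeros(w)}` over all ascent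
sequences `w` with initial run of zeros equal to `r`. -/
noncomputable def Gr (r : ℕ) : MvPowerSeries (Fin 4) ℚ :=
  fun d => (Nat.card {l : List ℕ // IsAscentSeq l ∧ runZeros l = r ∧ l.length = d 0 ∧
    ascents l = d 1 ∧ l.getLast? = some (d 2) ∧ l.count 0 = d 3} : ℚ)

/-- `G_r(t,u,1,z)` : the series `G_r` with `v` specialized to `1`. -/
noncomputable def GrOne (r : ℕ) : MvPowerSeries (Fin 4) ℚ :=
  fun d => if d 2 = 0 then
    (Nat.card {l : List ℕ // IsAscentSeq l ∧ runZeros l = r ∧ l.length = d 0 ∧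
      ascents l = d 1 ∧ l.count 0 = d 3} : ℚ)
  else 0

/-- `δ_0 = 1` and `δ_k = u - (1-t)^k (u-1)` for `k ≥ 1`. -/
noncomputable def deltaS : ℕ → MvPowerSeries (Fin 4) ℚ
  | 0 => 1
  | k + 1 => U - (1 - T) ^ (k + 1) * (U - 1)

/-- `γ_0 = 1` and `γ_k = u - (1-zt)(1-t)^{k-1} (u-1)` for `k ≥ 1`. -/
noncomputable def gammaS : ℕ → MvPowerSeries (Fin 4) ℚ
  | 0 => 1
  | k + 1 => U - (1 - Z * T) * (1 - T) ^ k * (U - 1)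

/-!
Every ascent sequence with initial run `r ≥ 1` is `0^r 1 m` with `0 1 m` an ascent sequence, so
`G_r(t,u,1,z) = t^{r+1} z^r F(1,u)`, where `F(v,w) = tailGF v w` counts the tails `m` by length
(`t`), ascents of `0 1 m` (`w`), last entry of `1 m` (`v`) and zeros (`z`). Appending one entry
to `m` gives the functional equation
`(1-v)(F(v,w) - wv) = t(((1-v)z + v) F(1,w) + (w-1)v F(v,w) - wv² F(1,vw))`.
At `v = δ_s/δ_{s+1}`, `w = u/δ_s` the kernel `t(w-1)v` equals `1-v`, so `F(v,w)` cancels, and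
`vw = u/δ_{s+1}`; this leaves the recursion
`δ_{s+1}γ_{s+1} F(1,u/δ_s) = uδ_s F(1,u/δ_{s+1}) + u(1-u)(1-t)^s`. Each step contributes a factor
`u`, so unrolling it from `F(1,u) = F(1,u/δ_0)` converges `u`-adically to the series.
-/

open Finset Function

namespace MvPowerSeries

section

variable {σ R : Type*} [CommRing R]

def VanishesBelow (j : σ) (g : ℕ → MvPowerSeries σ R) : Prop :=
  ∀ n e, e j < n → coeff e (g n) = 0

/-- `∑ n, g n`, computed coefficientwise. It is the `X j`-adic limit of the partial sums when
`VanishesBelow j g` (every monomial of `g n` has `X j`-degree at least `n`), since then only the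
terms `n ≤ e j` contribute to the coefficient of `e`. -/
def gradedSum (j : σ) (g : ℕ → MvPowerSeries σ R) : MvPowerSeries σ R :=
  fun e => ∑ n ∈ range (e j + 1), coeff e (g n)

theorem coeff_gradedSum (j : σ) (g : ℕ → MvPowerSeries σ R) (e : σ →₀ ℕ) :
    coeff e (gradedSum j g) = ∑ n ∈ range (e j + 1), coeff e (g n) :=
  rfl

variable {j : σ} {g : ℕ → MvPowerSeries σ R}

theorem gradedSum_add (g₁ g₂ : ℕ → MvPowerSeries σ R) :
    gradedSum j (fun n => g₁ n + g₂ n) = gradedSum j g₁ + gradedSum j g₂ := by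
  ext e
  simp only [coeff_gradedSum, map_add, sum_add_distrib]

theorem gradedSum_sub (g₁ g₂ : ℕ → MvPowerSeries σ R) :
    gradedSum j (fun n => g₁ n - g₂ n) = gradedSum j g₁ - gradedSum j g₂ := by
  ext e
  simp only [coeff_gradedSum, map_sub, sum_sub_distrib]

theorem coeff_gradedSum_of_lt (hg : VanishesBelow j g) {e : σ →₀ ℕ} {N : ℕ} (hN : e j < N) :
    coeff e (gradedSum j g) = ∑ n ∈ range N, coeff e (g n) :=
  sum_subset (range_subset_range.2 hN) fun n _ hn => hg n e (by simpa using hn)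

theorem coeff_X_pow_mul_of_lt {n : ℕ} {e : σ →₀ ℕ} (he : e j < n) (f : MvPowerSeries σ R) :
    coeff e (X j ^ n * f) = 0 := by
  classical
  rw [X_pow_eq, coeff_monomial_mul, if_neg]
  exact fun hle => (hle j).not_gt (by simpa using he)

theorem vanishesBelow_X_pow_mul (j : σ) (f : ℕ → MvPowerSeries σ R) :
    VanishesBelow j fun n => X j ^ n * f n :=
  fun _ _ he => coeff_X_pow_mul_of_lt he _

theorem VanishesBelow.mul_left (hg : VanishesBelow j g) (c : MvPowerSeries σ R) :
    VanishesBelow j fun n => c * g n := by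
  classical
  intro n e he
  rw [coeff_mul]
  refine sum_eq_zero fun p hp => ?_
  have : p.2 j ≤ e j := by rw [← (mem_antidiagonal.1 hp)]; simp
  rw [hg n p.2 (this.trans_lt he), mul_zero]

theorem VanishesBelow.succ (hg : VanishesBelow j g) : VanishesBelow j fun n => g (n + 1) :=
  fun n e he => hg (n + 1) e (by omega)

theorem gradedSum_mul_left (hg : VanishesBelow j g) (c : MvPowerSeries σ R) :
    gradedSum j (fun n => c * g n) = c * gradedSum j g := by
  classical
  ext e
  rw [coeff_gradedSum, coeff_mul]
  simp only [coeff_mul]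
  rw [sum_comm]
  refine sum_congr rfl fun p hp => ?_
  have : p.2 j < e j + 1 := by rw [← (mem_antidiagonal.1 hp)]; simp
  rw [coeff_gradedSum_of_lt hg this, mul_sum]

theorem gradedSum_succ (hg : VanishesBelow j g) :
    gradedSum j (fun n => g (n + 1)) = gradedSum j g - g 0 := by
  ext e
  rw [map_sub, coeff_gradedSum, coeff_gradedSum, sum_range_succ, hg _ e (by omega), add_zero,
    sum_range_succ' (fun n => coeff e (g n)), add_sub_cancel_right]

theorem eq_gradedSum_of_eq_mul_add {x a b : ℕ → MvPowerSeries σ R}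
    (h : ∀ s, x s = X j * a s * x (s + 1) + b s) :
    x 0 = gradedSum j fun s => X j ^ s * (∏ i ∈ range s, a i) * b s := by
  have hN : ∀ N, x 0 = ∑ s ∈ range N, X j ^ s * (∏ i ∈ range s, a i) * b s +
      X j ^ N * ((∏ i ∈ range N, a i) * x N) := by
    intro N
    induction N with
    | zero => simp
    | succ N ih => rw [ih, h N, sum_range_succ, prod_range_succ]; ring
  ext e
  rw [hN (e j + 1), map_add, map_sum, coeff_X_pow_mul_of_lt (Nat.lt_succ_self _), add_zero,
    coeff_gradedSum]

theorem coeff_gradedSum_sum_monomial {α : Type*} (s : ℕ → Finset α) (f : α → σ →₀ ℕ)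
    (hs : Pairwise (Disjoint on s)) (hf : ∀ n, ∀ x ∈ s n, n ≤ f x j) (e : σ →₀ ℕ) :
    coeff e (gradedSum j fun n => ∑ x ∈ s n, monomial (f x) (1 : R)) =
      Nat.card {x // (∃ n, x ∈ s n) ∧ f x = e} := by
  classical
  simp only [coeff_gradedSum, map_sum, coeff_monomial]
  rw [← sum_biUnion (hs.set_pairwise _), sum_boole, ← Nat.card_eq_finsetCard]
  congr 1
  refine Nat.card_congr (Equiv.subtypeEquivRight fun x => ?_)
  simp only [mem_filter, mem_biUnion, mem_range, Nat.lt_succ_iff, eq_comm (a := e)]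
  exact ⟨fun ⟨⟨n, _, hn⟩, he⟩ => ⟨⟨n, hn⟩, he⟩,
    fun ⟨⟨n, hn⟩, he⟩ => ⟨⟨n, he ▸ hf n x hn, hn⟩, he⟩⟩

end

theorem hasPSSum_gradedSum {σ : Type*} {j : σ} {g : ℕ → MvPowerSeries σ ℚ}
    (hg : VanishesBelow j g) : HasPSSum g (gradedSum j g) :=
  fun e => ⟨range (e j + 1), fun n hn => hg n e (by simpa using hn), rfl⟩

end MvPowerSeries

namespace AscentSeq

open List

theorem ascents_cons_cons (x y : ℕ) (l : List ℕ) :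
    ascents (x :: y :: l) = ascents (y :: l) + if x < y then 1 else 0 := by
  simp [ascents, List.countP_cons, add_comm]

-- For `w = []` the default `x` of `getLastD` makes the indicator vanish.
theorem ascents_append_singleton : ∀ (w : List ℕ) (x : ℕ),
    ascents (w ++ [x]) = ascents w + if w.getLastD x < x then 1 else 0
  | [], x => by simp [ascents]
  | [a], x => by simp [ascents]
  | a :: b :: t, x => by
    rw [cons_append, cons_append, ascents_cons_cons, ← cons_append,
      ascents_append_singleton (b :: t), ascents_cons_cons, getLastD_cons, getLastD_cons,
      getLastD_cons]
    omega

theorem cons_cons_append_singleton (a b : ℕ) (m : List ℕ) (j : ℕ) :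
    a :: b :: (m ++ [j]) = a :: b :: m ++ [j] := rfl

theorem ascents_replicate_zero (r : ℕ) : ascents (replicate r 0) = 0 := by
  induction r with
  | zero => rfl
  | succ r ih => simp [replicate_succ', ascents_append_singleton, ih]

theorem ascents_replicate_zero_append {r : ℕ} (hr : 1 ≤ r) (w : List ℕ) :
    ascents (replicate r 0 ++ w) = ascents (0 :: w) := by
  induction r, hr using Nat.le_induction with
  | base => rfl
  | succ r hr ih =>
    obtain ⟨k, rfl⟩ := Nat.exists_eq_add_of_le' hr
    rw [← ih]
    exact (ascents_cons_cons 0 0 (replicate k 0 ++ w)).trans (add_zero _)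

theorem isAscentSeq_append_singleton {w : List ℕ} (hw : w ≠ []) (x : ℕ) :
    IsAscentSeq (w ++ [x]) ↔ IsAscentSeq w ∧ x ≤ ascents w + 1 := by
  have hlen : w.length ≠ 0 := by simpa using hw
  have hprefix : ∀ i (hi : i < w.length),
      (w ++ [x])[i]'(by simp; omega) = w[i] ∧ (w ++ [x]).take i = w.take i :=
    fun i hi => ⟨getElem_append_left hi, take_append_of_le_length hi.le⟩
  constructor
  · intro h
    refine ⟨fun i hi => ?_, ?_⟩
    · simpa [hprefix i hi] using h i (by simp; omega)
    · simpa [hlen] using h w.length (by simp)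
  · rintro ⟨h, hx⟩ i hi
    rcases Nat.lt_or_ge i w.length with hi' | hi'
    · simpa [hprefix i hi'] using h i hi'
    · obtain rfl : i = w.length := by simp only [length_append, length_singleton] at hi; omega
      simpa [hlen] using hx

theorem IsAscentSeq.getLastD_le {l : List ℕ} (h : IsAscentSeq l) :
    l.getLastD 0 ≤ ascents l + 1 := by
  rcases eq_nil_or_concat l with rfl | ⟨w, x, rfl⟩
  · simp
  rw [concat_eq_append] at h ⊢
  rw [getLastD_concat, ascents_append_singleton]
  rcases eq_or_ne w [] with rfl | hw
  · simp [show x = 0 by simpa using h 0 (by simp)]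
  · have := ((isAscentSeq_append_singleton hw x).1 h).2
    omega

theorem isAscentSeq_replicate_zero_append_iff {r : ℕ} (hr : 1 ≤ r) (m : List ℕ) :
    IsAscentSeq (replicate r 0 ++ 1 :: m) ↔ IsAscentSeq (0 :: 1 :: m) := by
  induction m using reverseRecOn with
  | nil =>
    refine iff_of_true ?_ (by unfold IsAscentSeq; decide)
    exact (isAscentSeq_append_singleton (by simp; omega) 1).2
      ⟨fun i hi => by simp, by simp [ascents_replicate_zero]⟩
  | append_singleton m j ih =>
    rw [show replicate r 0 ++ 1 :: (m ++ [j]) = replicate r 0 ++ 1 :: m ++ [j] by simp,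
      cons_cons_append_singleton, isAscentSeq_append_singleton (by simp),
      isAscentSeq_append_singleton (by simp), ih, ascents_replicate_zero_append hr]

theorem runZeros_replicate_zero_append (r : ℕ) (m : List ℕ) :
    runZeros (replicate r 0 ++ 1 :: m) = r := by
  simp [runZeros]

theorem IsAscentSeq.exists_eq_replicate_zero_append {l : List ℕ} (h : IsAscentSeq l) {r : ℕ}
    (hr : 1 ≤ r) (hrun : runZeros l = r) : ∃ m, l = replicate r 0 ++ 1 :: m := by
  have hall : ¬ l.all (· == 0) := by
    intro hc
    simp only [runZeros, hc, if_true] at hrun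
    omega
  rw [runZeros, if_neg hall] at hrun
  have htake : l.takeWhile (· == 0) = replicate r 0 :=
    eq_replicate_iff.2 ⟨hrun, fun b hb => by simpa using mem_takeWhile_imp hb⟩
  obtain ⟨x, m, hdrop⟩ : ∃ x m, l.dropWhile (· == 0) = x :: m := by
    cases hd : l.dropWhile (· == 0) with
    | nil => exact absurd (all_eq_true.2 (dropWhile_eq_nil_iff.1 hd)) hall
    | cons x m => exact ⟨x, m, rfl⟩
  have hx : x ≠ 0 := by simpa [hdrop] using head_dropWhile_not (· == 0) (l := l) (by simp [hdrop])
  have hl : l = replicate r 0 ++ x :: m := by rw [← htake, ← hdrop, takeWhile_append_dropWhile]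
  have hx1 : x ≤ 1 := by
    simpa [hl, ascents_replicate_zero, show r ≠ 0 by omega] using h r (by simp [hl])
  exact ⟨m, by rw [hl, show x = 1 by omega]⟩

def ascentTails : ℕ → Finset (List ℕ)
  | 0 => {[]}
  | n + 1 => ((ascentTails n).sigma fun m => Finset.range (ascents (0 :: 1 :: m) + 2)).image
      fun p => p.1 ++ [p.2]

theorem mem_ascentTails {n : ℕ} {m : List ℕ} :
    m ∈ ascentTails n ↔ m.length = n ∧ IsAscentSeq (0 :: 1 :: m) := by
  induction n generalizing m with
  | zero =>
    simp only [ascentTails, Finset.mem_singleton, length_eq_zero_iff, iff_self_and]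
    rintro rfl
    unfold IsAscentSeq
    decide
  | succ n ih =>
    simp only [ascentTails, Finset.mem_image, Finset.mem_sigma, Finset.mem_range, ih]
    constructor
    · rintro ⟨⟨m', j⟩, ⟨⟨hlen, hv⟩, hj⟩, rfl⟩
      rw [cons_cons_append_singleton, isAscentSeq_append_singleton (by simp)]
      exact ⟨by simp [hlen], hv, by omega⟩
    · rintro ⟨hlen, hv⟩
      obtain ⟨m', j, rfl⟩ : ∃ m' j, m = m' ++ [j] := by
        simpa using (eq_nil_or_concat m).resolve_left (by rintro rfl; simp at hlen)
      rw [cons_cons_append_singleton, isAscentSeq_append_singleton (by simp)] at hv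
      exact ⟨⟨m', j⟩, ⟨⟨by simpa using hlen, hv.1⟩,
        show j < ascents (0 :: 1 :: m') + 2 by omega⟩, rfl⟩

theorem sum_ascentTails_succ {M : Type*} [AddCommMonoid M] (n : ℕ) (f : List ℕ → M) :
    ∑ m ∈ ascentTails (n + 1), f m =
      ∑ m ∈ ascentTails n, ∑ j ∈ Finset.range (ascents (0 :: 1 :: m) + 2), f (m ++ [j]) := by
  rw [ascentTails, sum_image, sum_sigma]
  rintro ⟨m, j⟩ - ⟨m', j'⟩ - h
  obtain ⟨rfl, h'⟩ := append_inj' h rfl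
  simp_all

end AscentSeq

section TailPoly

open AscentSeq

variable {R : Type*} [CommRing R]

def tailWeight (z v w : R) (m : List ℕ) : R :=
  w ^ ascents (0 :: 1 :: m) * v ^ m.getLastD 1 * z ^ m.count 0

def tailPoly (z v w : R) (n : ℕ) : R :=
  ∑ m ∈ ascentTails n, tailWeight z v w m

theorem tailPoly_zero (z v w : R) : tailPoly z v w 0 = w * v := by
  simp [tailPoly, tailWeight, ascentTails, ascents]

theorem tailWeight_append_singleton (z v w : R) (m : List ℕ) (j : ℕ) :
    tailWeight z v w (m ++ [j]) =
      w ^ (ascents (0 :: 1 :: m) + if m.getLastD 1 < j then 1 else 0) * v ^ j *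
        z ^ (m.count 0 + if j = 0 then 1 else 0) := by
  rw [tailWeight, cons_cons_append_singleton, ascents_append_singleton, List.getLastD_cons,
    List.getLastD_cons, List.getLastD_concat, List.count_append]
  simp only [List.count_singleton, beq_iff_eq]

theorem one_sub_mul_sum_tailWeight_append_singleton (z v w : R) {m : List ℕ}
    (hm : IsAscentSeq (0 :: 1 :: m)) :
    (1 - v) * ∑ j ∈ Finset.range (ascents (0 :: 1 :: m) + 2), tailWeight z v w (m ++ [j]) =
      ((1 - v) * z + v) * tailWeight z 1 w m + (w - 1) * v * tailWeight z v w m -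
        w * v ^ 2 * tailWeight z 1 (v * w) m := by
  simp only [tailWeight_append_singleton]
  simp only [tailWeight, one_pow, mul_one]
  set a := ascents (0 :: 1 :: m)
  set l := m.getLastD 1
  set c := m.count 0
  have hl : l ≤ a + 1 := by
    have := hm.getLastD_le
    rwa [List.getLastD_cons, List.getLastD_cons] at this
  rw [range_eq_Ico, sum_eq_sum_Ico_succ_bot (by omega),
    ← sum_Ico_consecutive _ (show 1 ≤ l + 1 by omega) (show l + 1 ≤ a + 2 by omega)]
  have hlow : ∀ j ∈ Ico 1 (l + 1), w ^ (a + if l < j then 1 else 0) * v ^ j *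
      z ^ (c + if j = 0 then 1 else 0) = w ^ a * z ^ c * v ^ j := by
    intro j hj
    rw [mem_Ico] at hj
    rw [if_neg (by omega), if_neg (by omega)]
    ring
  have hhigh : ∀ j ∈ Ico (l + 1) (a + 2), w ^ (a + if l < j then 1 else 0) * v ^ j *
      z ^ (c + if j = 0 then 1 else 0) = w ^ (a + 1) * z ^ c * v ^ j := by
    intro j hj
    rw [mem_Ico] at hj
    rw [if_pos (by omega), if_neg (by omega)]
    ring
  rw [sum_congr rfl hlow, sum_congr rfl hhigh, ← mul_sum, ← mul_sum]
  have g1 := geom_sum_Ico_mul_neg v (show 1 ≤ l + 1 by omega)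
  have g2 := geom_sum_Ico_mul_neg v (show l + 1 ≤ a + 2 by omega)
  simp only [Nat.not_lt_zero, if_false, if_true, add_zero, pow_zero]
  linear_combination (w ^ a * z ^ c) * g1 + (w ^ (a + 1) * z ^ c) * g2

theorem one_sub_mul_tailPoly_succ (z v w : R) (n : ℕ) :
    (1 - v) * tailPoly z v w (n + 1) =
      ((1 - v) * z + v) * tailPoly z 1 w n + (w - 1) * v * tailPoly z v w n -
        w * v ^ 2 * tailPoly z 1 (v * w) n := by
  simp only [tailPoly, sum_ascentTails_succ, mul_sum, ← sum_add_distrib, ← sum_sub_distrib]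
  exact sum_congr rfl fun m hm =>
    (mul_sum _ _ _).symm.trans
      (one_sub_mul_sum_tailWeight_append_singleton z v w (mem_ascentTails.1 hm).2)

end TailPoly

theorem T_ne_zero : T ≠ 0 := fun h => by
  simpa [T] using congrArg (coeff (Finsupp.single (0 : Fin 4) 1)) h

theorem deltaS_mul_inv (k : ℕ) : deltaS k * (deltaS k)⁻¹ = 1 :=
  MvPowerSeries.mul_inv_cancel _ (by cases k <;> simp [deltaS, T, U])

theorem gammaS_mul_inv (k : ℕ) : gammaS k * (gammaS k)⁻¹ = 1 :=
  MvPowerSeries.mul_inv_cancel _ (by cases k <;> simp [gammaS, T, U, Z])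

theorem deltaS_succ (s : ℕ) : deltaS (s + 1) = deltaS s + T * ((1 - T) ^ s * (U - 1)) := by
  cases s <;> simp only [deltaS] <;> ring

theorem U_eq_deltaS_add (s : ℕ) : U = deltaS s + (1 - T) ^ s * (U - 1) := by
  cases s <;> simp only [deltaS] <;> ring

theorem gammaS_succ (s : ℕ) : gammaS (s + 1) = deltaS s + T * Z * ((1 - T) ^ s * (U - 1)) := by
  cases s <;> simp only [gammaS, deltaS] <;> ring

noncomputable def tailGF (v w : MvPowerSeries (Fin 4) ℚ) : MvPowerSeries (Fin 4) ℚ :=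
  gradedSum 0 fun n => T ^ n * tailPoly Z v w n

theorem vanishesBelow_tailPoly (v w : MvPowerSeries (Fin 4) ℚ) :
    VanishesBelow 0 fun n => T ^ n * tailPoly Z v w n :=
  vanishesBelow_X_pow_mul 0 _

theorem tailGF_functional_equation (v w : MvPowerSeries (Fin 4) ℚ) :
    (1 - v) * (tailGF v w - w * v) =
      T * (((1 - v) * Z + v) * tailGF 1 w + (w - 1) * v * tailGF v w -
        w * v ^ 2 * tailGF 1 (v * w)) := by
  have hslice : (fun n => (1 - v) * (T ^ (n + 1) * tailPoly Z v w (n + 1))) = fun n =>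
      T * ((1 - v) * Z + v) * (T ^ n * tailPoly Z 1 w n) +
        T * ((w - 1) * v) * (T ^ n * tailPoly Z v w n) -
        T * (w * v ^ 2) * (T ^ n * tailPoly Z 1 (v * w) n) := by
    funext n
    linear_combination (T ^ (n + 1)) * one_sub_mul_tailPoly_succ Z v w n
  have hsum := congrArg (gradedSum 0) hslice
  rw [gradedSum_mul_left (vanishesBelow_tailPoly v w).succ,
    gradedSum_succ (vanishesBelow_tailPoly v w), gradedSum_sub, gradedSum_add,
    gradedSum_mul_left (vanishesBelow_tailPoly 1 w),
    gradedSum_mul_left (vanishesBelow_tailPoly v w),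
    gradedSum_mul_left (vanishesBelow_tailPoly 1 (v * w)), pow_zero, one_mul,
    tailPoly_zero] at hsum
  simp only [tailGF]
  linear_combination hsum

theorem tailGF_recursion (s : ℕ) :
    deltaS (s + 1) * gammaS (s + 1) * tailGF 1 (U * (deltaS s)⁻¹) =
      U * deltaS s * tailGF 1 (U * (deltaS (s + 1))⁻¹) + U * (1 - U) * (1 - T) ^ s := by
  have fe := tailGF_functional_equation (deltaS s * (deltaS (s + 1))⁻¹) (U * (deltaS s)⁻¹)
  set d := deltaS s
  set d' := deltaS (s + 1)
  set g := gammaS (s + 1)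
  have hd := deltaS_mul_inv s
  have hd' := deltaS_mul_inv (s + 1)
  have hvw : d * d'⁻¹ * (U * d⁻¹) = U * d'⁻¹ := by linear_combination (U * d'⁻¹) * hd
  rw [hvw] at fe
  set A := tailGF (d * d'⁻¹) (U * d⁻¹)
  set B := tailGF 1 (U * d⁻¹)
  set C := tailGF 1 (U * d'⁻¹)
  have one_sub_v : 1 - d * d'⁻¹ = T * ((1 - T) ^ s * (U - 1)) * d'⁻¹ := by
    linear_combination d'⁻¹ * deltaS_succ s - hd'
  have kernel : T * (U * d⁻¹ - 1) * (d * d'⁻¹) = 1 - d * d'⁻¹ := by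
    linear_combination (T * d'⁻¹ * U) * hd + T * d'⁻¹ * U_eq_deltaS_add s - one_sub_v
  have z_coeff : (1 - d * d'⁻¹) * Z + d * d'⁻¹ = g * d'⁻¹ := by
    linear_combination Z * one_sub_v - d'⁻¹ * gammaS_succ s
  have hT : T * (d'⁻¹ * (g * B - U * (d * d'⁻¹) * C + (1 - T) ^ s * (U - 1) * U * d'⁻¹)) = 0 := by
    linear_combination (-1 : MvPowerSeries (Fin 4) ℚ) * fe - A * kernel -
      U * d⁻¹ * (d * d'⁻¹) * one_sub_v +
      (T * (d * d'⁻¹) * C - T * ((1 - T) ^ s * (U - 1)) * d'⁻¹) * hvw - T * B * z_coeff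
  have hX := (mul_eq_zero.1 hT).resolve_left T_ne_zero
  linear_combination d' ^ 2 * hX -
    (d' * g * B - (U * d * C + U * (1 - U) * (1 - T) ^ s) * (1 + d' * d'⁻¹)) * hd'

section Coefficients

open AscentSeq List

noncomputable def wordDeg (l : List ℕ) : Fin 4 →₀ ℕ :=
  Finsupp.single 0 l.length + Finsupp.single 1 (ascents l) + Finsupp.single 3 (l.count 0)

theorem wordDeg_eq_iff {l : List ℕ} {e : Fin 4 →₀ ℕ} :
    wordDeg l = e ↔ l.length = e 0 ∧ ascents l = e 1 ∧ e 2 = 0 ∧ l.count 0 = e 3 := by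
  constructor
  · rintro rfl
    simp [wordDeg]
  · rintro ⟨h0, h1, h2, h3⟩
    ext i
    fin_cases i <;> simp [wordDeg, *]

theorem monomial_wordDeg (l : List ℕ) :
    monomial (wordDeg l) (1 : ℚ) = T ^ l.length * U ^ ascents l * Z ^ l.count 0 := by
  rw [wordDeg, T, U, Z, X_pow_eq, X_pow_eq, X_pow_eq, monomial_mul_monomial,
    monomial_mul_monomial, one_mul, one_mul]

theorem coeff_GrOne (r : ℕ) (e : Fin 4 →₀ ℕ) :
    coeff e (GrOne r) = Nat.card {l // IsAscentSeq l ∧ runZeros l = r ∧ wordDeg l = e} := by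
  change (if e 2 = 0 then _ else 0) = _
  split_ifs with h2
  · exact_mod_cast Nat.card_congr (Equiv.subtypeEquivRight fun l => by
      rw [wordDeg_eq_iff]; tauto)
  · have : IsEmpty {l // IsAscentSeq l ∧ runZeros l = r ∧ wordDeg l = e} :=
      ⟨fun ⟨_, _, _, hl⟩ => h2 (wordDeg_eq_iff.1 hl).2.2.1⟩
    simp

noncomputable def ascentSeqRunEquiv {r : ℕ} (hr : 1 ≤ r) (P : List ℕ → Prop) :
    {m // IsAscentSeq (0 :: 1 :: m) ∧ P (replicate r 0 ++ 1 :: m)} ≃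
      {l // IsAscentSeq l ∧ runZeros l = r ∧ P l} :=
  Equiv.ofBijective
    (fun m => ⟨replicate r 0 ++ 1 :: m,
      (isAscentSeq_replicate_zero_append_iff hr m).2 m.2.1, runZeros_replicate_zero_append r m,
      m.2.2⟩)
    ⟨fun m m' h => Subtype.ext (by simpa using congrArg Subtype.val h), by
      rintro ⟨l, hl, hrun, hP⟩
      obtain ⟨m, rfl⟩ := hl.exists_eq_replicate_zero_append hr hrun
      exact ⟨⟨m, (isAscentSeq_replicate_zero_append_iff hr m).1 hl, hP⟩, rfl⟩⟩

theorem mul_tailGF_eq_gradedSum {r : ℕ} (hr : 1 ≤ r) :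
    T ^ (r + 1) * Z ^ r * tailGF 1 U =
      gradedSum 0 fun n => ∑ m ∈ ascentTails n, monomial (wordDeg (replicate r 0 ++ 1 :: m)) 1 := by
  rw [tailGF, ← gradedSum_mul_left (vanishesBelow_tailPoly 1 U)]
  congr 1
  funext n
  rw [tailPoly, mul_sum, mul_sum]
  refine sum_congr rfl fun m hm => ?_
  rw [monomial_wordDeg, ascents_replicate_zero_append hr, ← (mem_ascentTails.1 hm).1, tailWeight,
    length_append, length_replicate, length_cons, count_append, count_replicate_self,
    count_cons_of_ne one_ne_zero, one_pow]
  ring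

theorem GrOne_eq_mul_tailGF {r : ℕ} (hr : 1 ≤ r) : GrOne r = T ^ (r + 1) * Z ^ r * tailGF 1 U := by
  ext e
  have hdisj : Pairwise (_root_.Disjoint on ascentTails) := fun n n' hn => Finset.disjoint_left.2
    fun m h h' => hn ((mem_ascentTails.1 h).1.symm.trans (mem_ascentTails.1 h').1)
  have hdeg : ∀ n, ∀ m ∈ ascentTails n, n ≤ wordDeg (replicate r 0 ++ 1 :: m) 0 := by
    intro n m hm
    rw [← (wordDeg_eq_iff (l := replicate r 0 ++ 1 :: m)).1 rfl |>.1, length_append, length_cons,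
      (mem_ascentTails.1 hm).1]
    omega
  rw [coeff_GrOne, mul_tailGF_eq_gradedSum hr, coeff_gradedSum_sum_monomial _ _ hdisj hdeg]
  refine congrArg _ (Nat.card_congr ((Equiv.subtypeEquivRight fun m => ?_).trans
    (ascentSeqRunEquiv hr (wordDeg · = e)))).symm
  exact and_congr_left' ⟨fun ⟨_, hm⟩ => (mem_ascentTails.1 hm).2,
    fun h => ⟨_, mem_ascentTails.2 ⟨rfl, h⟩⟩⟩

end Coefficients

theorem tailGF_eq_mul_add (s : ℕ) :
    tailGF 1 (U * (deltaS s)⁻¹) =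
      U * (deltaS s * (deltaS (s + 1))⁻¹ * (gammaS (s + 1))⁻¹) * tailGF 1 (U * (deltaS (s + 1))⁻¹) +
        U * (1 - U) * (1 - T) ^ s * (deltaS (s + 1))⁻¹ * (gammaS (s + 1))⁻¹ := by
  linear_combination (deltaS (s + 1))⁻¹ * (gammaS (s + 1))⁻¹ * tailGF_recursion s -
    tailGF 1 (U * (deltaS s)⁻¹) * gammaS (s + 1) * (gammaS (s + 1))⁻¹ * deltaS_mul_inv (s + 1) -
    tailGF 1 (U * (deltaS s)⁻¹) * gammaS_mul_inv (s + 1)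

theorem prod_range_deltaS_mul_inv (s : ℕ) :
    ∏ i ∈ range s, deltaS i * (deltaS (i + 1))⁻¹ * (gammaS (i + 1))⁻¹ =
      (deltaS s)⁻¹ * ∏ i ∈ Icc 1 s, (gammaS i)⁻¹ := by
  induction s with
  | zero => simp [deltaS]
  | succ s ih =>
    rw [prod_range_succ, ih, prod_Icc_succ_top (by omega)]
    linear_combination (∏ i ∈ Icc 1 s, (gammaS i)⁻¹) * (deltaS (s + 1))⁻¹ *
      (gammaS (s + 1))⁻¹ * deltaS_mul_inv s

noncomputable def seriesTerm (s : ℕ) : MvPowerSeries (Fin 4) ℚ :=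
  U ^ s * (1 - T) ^ s * (deltaS s)⁻¹ * (deltaS (s + 1))⁻¹ * ∏ i ∈ Icc 1 (s + 1), (gammaS i)⁻¹

theorem vanishesBelow_seriesTerm : VanishesBelow 1 seriesTerm := by
  have : seriesTerm = fun s => X 1 ^ s * ((1 - T) ^ s * (deltaS s)⁻¹ * (deltaS (s + 1))⁻¹ *
      ∏ i ∈ Icc 1 (s + 1), (gammaS i)⁻¹) := by
    funext s
    rw [seriesTerm, U]
    ring
  rw [this]
  exact vanishesBelow_X_pow_mul 1 _

theorem tailGF_one_U : tailGF 1 U = U * (1 - U) * gradedSum 1 seriesTerm := by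
  have h := eq_gradedSum_of_eq_mul_add (j := 1) (x := fun s => tailGF 1 (U * (deltaS s)⁻¹))
    tailGF_eq_mul_add
  rw [show deltaS 0 = 1 from rfl, inv_one, mul_one] at h
  rw [h, ← gradedSum_mul_left vanishesBelow_seriesTerm]
  congr 1
  funext s
  rw [prod_range_deltaS_mul_inv, seriesTerm, prod_Icc_succ_top (by omega), show X 1 = U from rfl]
  ring

theorem GrOne_eq_series (r : ℕ) (hr : 1 ≤ r) :
    ∃ S : MvPowerSeries (Fin 4) ℚ,
      HasPSSum (fun s : ℕ =>
        U ^ s * (1 - T) ^ s * (deltaS s)⁻¹ * (deltaS (s + 1))⁻¹ *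
          ∏ i ∈ Finset.Icc 1 (s + 1), (gammaS i)⁻¹) S ∧
      GrOne r = T ^ (r + 1) * Z ^ r * U * (1 - U) * S := by
  refine ⟨gradedSum 1 seriesTerm, hasPSSum_gradedSum vanishesBelow_seriesTerm, ?_⟩
  rw [GrOne_eq_mul_tailGF hr, tailGF_one_U]
  ring
end

section
/- Let R_n denote the number of restricted ascent sequences of length n. Then R_0 = 1 and, for every n ≥ 0, R_{n+1} = Σ_{k=0}^{n} R_k·R_{n-k}. -/
/-- `l` is a restricted ascent sequence: `x₁ = 0` and, for `i ≥ 2`,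
`max(m-1,0) ≤ xᵢ ≤ 1 + asc(x₁,…,x_{i-1})` where `m = max(x₁,…,x_{i-1})`
(here `m - 1` is truncated subtraction, i.e. `max(m-1,0)`).
The empty sequence is a restricted ascent sequence. -/
def IsRestrictedAscentSeq (l : List ℕ) : Prop :=
  ∀ i (h : i < l.length),
    if i = 0 then l.get ⟨i, h⟩ = 0
    else (l.take i).foldr max 0 - 1 ≤ l.get ⟨i, h⟩ ∧ l.get ⟨i, h⟩ ≤ ascents (l.take i) + 1

/-- The number of restricted ascent sequences of length `n`. -/
noncomputable def R (n : ℕ) : ℕ :=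
  Nat.card {l : List ℕ // IsRestrictedAscentSeq l ∧ l.length = n}

/-!
Whether a value may be appended to a nonempty restricted ascent sequence, and the maximum,
ascent count and last entry of the longer sequence, depend only on those three statistics.
Starting from `[0]`, the last entry is always the maximum or one less, and the number of
extensions depends only on which, and on the excess `asc - max`. Their generating functions
satisfy a linear system solved by `C²` for the all-zero sequences, and by `C³ qᵈ` resp.
`C² qᵈ⁺¹` for excess `d`, where `C = 1 + X C²` is the Catalan series and `q = 1 + X C³`.
Hence `R (n + 1) = [Xⁿ] C² = catalan (n + 1)`, and the recursion is Segner's.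
-/

open Finset PowerSeries

theorem foldr_max_eq_max_foldr (l : List ℕ) (b : ℕ) :
    l.foldr max b = max (l.foldr max 0) b := by
  induction l <;> simp [*, max_assoc]

theorem ascents_append_singleton {l : List ℕ} (hl : l ≠ []) (v : ℕ) :
    ascents (l ++ [v]) = ascents l + if l.getLastD 0 < v then 1 else 0 := by
  induction l with
  | nil => contradiction
  | cons a t ih =>
    cases t with
    | nil => simp [ascents]
    | cons b t =>
      simp only [ascents, List.cons_append, List.tail_cons, List.zip_cons_cons,
        List.countP_cons, decide_eq_true_eq] at ih ⊢
      rw [ih (List.cons_ne_nil b t), add_right_comm]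
      simp only [List.getLastD_cons]

theorem isRestrictedAscentSeq_nil : IsRestrictedAscentSeq [] := by
  intro i h
  simp at h

theorem IsRestrictedAscentSeq.of_append {l s : List ℕ} (h : IsRestrictedAscentSeq (l ++ s)) :
    IsRestrictedAscentSeq l := by
  intro i hi
  simpa [List.take_append_of_le_length hi.le, List.getElem_append_left hi] using
    h i (by rw [List.length_append]; omega)

theorem isRestrictedAscentSeq_append_singleton_iff {l : List ℕ} (hl : l ≠ []) (v : ℕ) :
    IsRestrictedAscentSeq (l ++ [v]) ↔
      IsRestrictedAscentSeq l ∧ v ∈ Icc (l.foldr max 0 - 1) (ascents l + 1) := by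
  have hpos : l.length ≠ 0 := by simpa using hl
  refine ⟨fun h => ⟨IsRestrictedAscentSeq.of_append h, ?_⟩, fun ⟨h, hv⟩ i hi => ?_⟩
  · simpa [hpos] using h l.length (by simp)
  · rw [List.length_append, List.length_singleton] at hi
    rcases (show i < l.length ∨ i = l.length by omega) with hi | rfl
    · simpa [List.take_append_of_le_length hi.le, List.getElem_append_left hi] using h i hi
    · simpa [hpos] using hv

theorem sum_Icc_eq_add_add_sum_range {M : Type*} [AddCommMonoid M] (f : ℕ → M) (m d : ℕ) :
    ∑ v ∈ Icc m (m + d + 2), f v =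
      f m + f (m + 1) + ∑ j ∈ range (d + 1), f (m + d + 2 - j) := by
  rw [← Ico_add_one_right_eq_Icc, sum_Ico_eq_sum_range,
    show m + d + 2 + 1 - m = d + 1 + 1 + 1 by omega, sum_range_succ', sum_range_succ',
    ← sum_range_reflect]
  have hreflect : ∀ j ∈ range (d + 1), f (m + (d + 1 - 1 - j + 1 + 1)) = f (m + d + 2 - j) :=
    fun j hj => congrArg f (by rw [mem_range] at hj; omega)
  rw [sum_congr rfl hreflect]
  abel

section CatalanIdentities

variable {R : Type*} [CommRing R] {c x : R}

theorem sq_eq_one_add_mul_of_eq (hc : c = 1 + x * c ^ 2) : c ^ 2 = 1 + x * (c ^ 2 + c ^ 3) := by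
  linear_combination (c + 1) * hc

theorem cube_mul_pow_eq_one_add_mul (hc : c = 1 + x * c ^ 2) (d : ℕ) :
    c ^ 3 * (1 + x * c ^ 3) ^ d =
      1 + x * (c ^ 2 * (1 + x * c ^ 3) ^ (d + 1) + c ^ 3 * (1 + x * c ^ 3) ^ d
        + c ^ 3 * ∑ j ∈ range (d + 1), (1 + x * c ^ 3) ^ j) := by
  linear_combination (1 + x * c ^ 3) ^ d * (x * c ^ 3 + c ^ 2 + c + 1) * hc
    - mul_geom_sum (1 + x * c ^ 3) (d + 1)

theorem sq_mul_pow_succ_eq_one_add_mul (hc : c = 1 + x * c ^ 2) (d : ℕ) :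
    c ^ 2 * (1 + x * c ^ 3) ^ (d + 1) =
      1 + x * (c ^ 2 * (1 + x * c ^ 3) ^ (d + 1) + c ^ 3 * (1 + x * c ^ 3) ^ (d + 1)
        + c ^ 3 * ∑ j ∈ range (d + 1), (1 + x * c ^ 3) ^ j) := by
  linear_combination (1 + x * c ^ 3) ^ (d + 1) * sq_eq_one_add_mul_of_eq hc
    - mul_geom_sum (1 + x * c ^ 3) (d + 1)

end CatalanIdentities

namespace RestrictedAscent

structure State where
  maxEntry : ℕ
  asc : ℕ
  last : ℕ

def state (l : List ℕ) : State := ⟨l.foldr max 0, ascents l, l.getLastD 0⟩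

namespace State

def push (s : State) (v : ℕ) : State :=
  ⟨max s.maxEntry v, s.asc + if s.last < v then 1 else 0, v⟩

def allowed (s : State) : Finset ℕ := Icc (s.maxEntry - 1) (s.asc + 1)

def Reachable (s : State) : Prop :=
  (s.maxEntry = 0 ∧ s.asc = 0 ∧ s.last = 0) ∨
    (0 < s.maxEntry ∧ s.maxEntry ≤ s.asc ∧ (s.last = s.maxEntry ∨ s.last + 1 = s.maxEntry))

theorem Reachable.push {s : State} (hs : s.Reachable) {v : ℕ} (hv : v ∈ s.allowed) :
    (s.push v).Reachable := by
  simp only [allowed, mem_Icc] at hv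
  simp only [Reachable, State.push] at hs ⊢
  split_ifs <;> omega

def extensions : ℕ → State → Finset (List ℕ)
  | 0, _ => {[]}
  | k + 1, s => s.allowed.biUnion fun v =>
      (extensions k (s.push v)).map ⟨List.cons v, List.cons_injective⟩

theorem card_extensions_succ (s : State) (k : ℕ) :
    #(s.extensions (k + 1)) = ∑ v ∈ s.allowed, #((s.push v).extensions k) := by
  rw [extensions, card_biUnion]
  · simp
  · intro v _ w _ hvw
    simp only [Function.onFun, disjoint_left, mem_map, Function.Embedding.coeFn_mk]
    rintro _ ⟨t, -, rfl⟩ ⟨t', -, h⟩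
    exact hvw (List.cons_eq_cons.mp h).1.symm

end State

theorem state_append_singleton {l : List ℕ} (hl : l ≠ []) (v : ℕ) :
    state (l ++ [v]) = (state l).push v := by
  simp [state, State.push, List.foldr_append, foldr_max_eq_max_foldr l v,
    ascents_append_singleton hl]

theorem mem_extensions_state_iff {l : List ℕ} (hl : l ≠ []) (h : IsRestrictedAscentSeq l)
    (k : ℕ) (t : List ℕ) :
    t ∈ (state l).extensions k ↔ IsRestrictedAscentSeq (l ++ t) ∧ t.length = k := by
  induction k generalizing l t with
  | zero => cases t <;> simp [State.extensions, h]
  | succ k ih =>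
    cases t with
    | nil => simp [State.extensions]
    | cons v t =>
      simp only [State.extensions, mem_biUnion, mem_map, Function.Embedding.coeFn_mk,
        List.cons.injEq, List.length_cons, show l ++ v :: t = (l ++ [v]) ++ t by simp]
      constructor
      · rintro ⟨w, hw, t', ht', rfl, rfl⟩
        have hlw := (isRestrictedAscentSeq_append_singleton_iff hl w).mpr ⟨h, hw⟩
        rw [← state_append_singleton hl, ih (by simp) hlw] at ht'
        exact ⟨ht'.1, by omega⟩
      · rintro ⟨hlvt, hlen⟩
        have hlv := IsRestrictedAscentSeq.of_append hlvt
        have hv := ((isRestrictedAscentSeq_append_singleton_iff hl v).mp hlv).2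
        refine ⟨v, hv, t, ?_, rfl, rfl⟩
        rw [← state_append_singleton hl, ih (by simp) hlv]
        exact ⟨hlvt, by omega⟩

section Weight

variable {R : Type*} [CommRing R] {c x : R}

variable (c x) in
/-- With `c` the Catalan series and `x = X`, the generating function of the extensions of a
reachable state; it depends only on whether the last entry is the maximum and on the excess
`asc - maxEntry`. -/
def State.weight (s : State) : R :=
  if s.maxEntry = 0 then c ^ 2
  else if s.last = s.maxEntry then c ^ 3 * (1 + x * c ^ 3) ^ (s.asc - s.maxEntry)
  else c ^ 2 * (1 + x * c ^ 3) ^ (s.asc - s.maxEntry + 1)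

theorem State.weight_eq_one_add_mul_sum (hc : c = 1 + x * c ^ 2) {s : State}
    (hs : s.Reachable) : s.weight c x = 1 + x * ∑ v ∈ s.allowed, (s.push v).weight c x := by
  rcases hs with ⟨h0, ha, hl⟩ | ⟨hpos, hle, hlast⟩
  · have hallowed : s.allowed = {0, 1} := by rw [State.allowed, h0, ha]; rfl
    rw [hallowed, sum_pair zero_ne_one]
    simpa [State.weight, State.push, h0, ha, hl] using sq_eq_one_add_mul_of_eq hc
  · obtain ⟨m, d, hmax, hasc⟩ : ∃ m d, s.maxEntry = m + 1 ∧ s.asc = m + 1 + d :=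
      ⟨s.maxEntry - 1, s.asc - s.maxEntry, by omega, by omega⟩
    have hlast_le : s.last ≤ m + 1 := by omega
    have hallowed : s.allowed = Icc m (m + d + 2) := by
      rw [State.allowed, hmax, hasc]; congr 1; omega
    -- appending `m` or `m + 1` keeps the maximum; a larger value `m + d + 2 - j` becomes the
    -- new maximum, with excess `j`
    have hbelow : (s.push m).weight c x = c ^ 2 * (1 + x * c ^ 3) ^ (d + 1) := by
      simp [State.weight, State.push, hmax, hasc, show ¬ s.last < m by omega]
    have hnew : ∀ j ∈ range (d + 1),
        (s.push (m + d + 2 - j)).weight c x = c ^ 3 * (1 + x * c ^ 3) ^ j := by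
      intro j hj
      rw [mem_range] at hj
      simp [State.weight, State.push, hmax, hasc, show s.last < m + d + 2 - j by omega,
        show m + 1 ≤ m + d + 2 - j by omega, show m + d + 2 - j ≠ 0 by omega,
        show m + 1 + d + 1 - (m + d + 2 - j) = j by omega]
    rw [hallowed, sum_Icc_eq_add_add_sum_range, hbelow, sum_congr rfl hnew, ← mul_sum]
    rcases hlast with hlast | hlast
    · have hkeep : (s.push (m + 1)).weight c x = c ^ 3 * (1 + x * c ^ 3) ^ d := by
        simp [State.weight, State.push, hmax, hasc, hlast]
      rw [hkeep]
      simpa [State.weight, hmax, hasc, hlast] using cube_mul_pow_eq_one_add_mul hc d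
    · have hkeep : (s.push (m + 1)).weight c x = c ^ 3 * (1 + x * c ^ 3) ^ (d + 1) := by
        simp [State.weight, State.push, hmax, hasc, show s.last = m by omega,
          show m + 1 + d - m = d + 1 by omega]
      rw [hkeep]
      simpa [State.weight, hmax, hasc, show s.last = m by omega] using
        sq_mul_pow_succ_eq_one_add_mul hc d

end Weight

noncomputable def intCatalanSeries : PowerSeries ℤ :=
  PowerSeries.map (Nat.castRingHom ℤ) catalanSeries

theorem coeff_intCatalanSeries (n : ℕ) : coeff n intCatalanSeries = catalan n := by
  simp [intCatalanSeries]

theorem intCatalanSeries_eq_one_add_X_mul_sq :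
    intCatalanSeries = 1 + X * intCatalanSeries ^ 2 := by
  conv_lhs => rw [intCatalanSeries, ← catalanSeries_sq_mul_X_add_one]
  simp [intCatalanSeries, mul_comm, add_comm]

theorem coeff_intCatalanSeries_sq (n : ℕ) :
    coeff n (intCatalanSeries ^ 2) = (catalan (n + 1) : ℤ) := by
  conv_rhs => rw [← coeff_intCatalanSeries, intCatalanSeries_eq_one_add_X_mul_sq]
  simp

theorem card_extensions_eq_coeff_weight {s : State} (hs : s.Reachable) (k : ℕ) :
    (#(s.extensions k) : ℤ) = coeff k (s.weight intCatalanSeries X) := by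
  induction k generalizing s with
  | zero =>
    rw [State.weight_eq_one_add_mul_sum intCatalanSeries_eq_one_add_X_mul_sq hs]
    simp [State.extensions]
  | succ k ih =>
    rw [State.card_extensions_succ,
      State.weight_eq_one_add_mul_sum intCatalanSeries_eq_one_add_X_mul_sq hs]
    simp only [Nat.cast_sum, map_add, coeff_succ_X_mul, map_sum, coeff_one,
      if_neg k.succ_ne_zero, zero_add]
    exact sum_congr rfl fun v hv => ih (hs.push hv)

theorem R_succ_eq_card_extensions (n : ℕ) : R (n + 1) = #((state [0]).extensions n) := by
  have h0 : IsRestrictedAscentSeq [0] := by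
    intro i hi
    obtain rfl : i = 0 := by simpa using hi
    rfl
  rw [R, ← card_map ⟨List.cons 0, List.cons_injective⟩, ← Nat.card_eq_finsetCard]
  refine Nat.card_congr (Equiv.subtypeEquivRight fun l => ?_)
  simp only [mem_map, mem_extensions_state_iff (List.cons_ne_nil 0 []) h0,
    Function.Embedding.coeFn_mk]
  constructor
  · rintro ⟨hl, hlen⟩
    obtain ⟨a, t, rfl⟩ := List.exists_cons_of_length_eq_add_one hlen
    obtain rfl : a = 0 := by simpa using hl 0 (by simp)
    exact ⟨t, ⟨hl, by simpa using hlen⟩, rfl⟩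
  · rintro ⟨t, ⟨ht, hlen⟩, rfl⟩
    exact ⟨ht, by simp [hlen]⟩

theorem R_succ_eq_catalan (n : ℕ) : R (n + 1) = catalan (n + 1) := by
  have hreach : (state [0]).Reachable := Or.inl ⟨rfl, rfl, rfl⟩
  have hcard : (#((state [0]).extensions n) : ℤ) = catalan (n + 1) := by
    rw [card_extensions_eq_coeff_weight hreach]
    exact coeff_intCatalanSeries_sq n
  rw [R_succ_eq_card_extensions]
  exact_mod_cast hcard

end RestrictedAscent

theorem R_zero : R 0 = 1 :=
  Nat.card_eq_one_iff_exists.mpr ⟨⟨[], isRestrictedAscentSeq_nil, rfl⟩,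
    fun ⟨_, _, hl⟩ => Subtype.ext (List.length_eq_zero_iff.mp hl)⟩

theorem R_eq_catalan : ∀ n, R n = catalan n
  | 0 => R_zero.trans catalan_zero.symm
  | n + 1 => RestrictedAscent.R_succ_eq_catalan n

theorem R_catalan_recursion :
    R 0 = 1 ∧ ∀ n : ℕ, R (n + 1) = ∑ k ∈ Finset.range (n + 1), R k * R (n - k) := by
  refine ⟨R_zero, fun n => ?_⟩
  simp only [R_eq_catalan]
  rw [catalan_succ, Fin.sum_univ_eq_sum_range (fun i => catalan i * catalan (n - i))]
end
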